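/- Let v : ℝ³ → ℝ³ be differentiable at x_0 and r_1, r_2, r_3 linearly independent with V = (r_1×r_2)·r_3 ≠ 0. Then the Eulerian tessellation divergence D_0(v) = (1/V)[(v(x_0+r_1)-v(x_0))·(r_2×r_3) + (v(x_0+r_2)-v(x_0))·(r_3×r_1) + (v(x_0+r_3)-v(x_0))·(r_1×r_2)] converges to div v(x_0) as the vectors r_j = ε s_j are scaled by ε → 0 (with s_1,s_2,s_3 fixed linearly independent vectors). -/

import Mathlib

open Matrix Filter

/-- Triple-product trace identity: for a linear map `A` on `ℝ³` and vectors `a b c`,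
`(A a)·(b×c) + (A b)·(c×a) + (A c)·(a×b) = tr A * ((a×b)·c)`. -/
lemma key_identity (A : (Fin 3 → ℝ) →ₗ[ℝ] (Fin 3 → ℝ)) (a b c : Fin 3 → ℝ) :
    (A a) ⬝ᵥ (crossProduct b c) + (A b) ⬝ᵥ (crossProduct c a) + (A c) ⬝ᵥ (crossProduct a b)
      = (LinearMap.trace ℝ (Fin 3 → ℝ) A) * ((crossProduct a b) ⬝ᵥ c) := by
  have hA : ∀ u, A u = (LinearMap.toMatrix' A).mulVec u := by
    intro u
    conv_lhs => rw [← Matrix.toLin'_toMatrix' A]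
    rw [Matrix.toLin'_apply]
  rw [LinearMap.trace_eq_matrix_trace ℝ (Pi.basisFun ℝ (Fin 3)), LinearMap.toMatrix_eq_toMatrix']
  simp only [hA, cross_apply, Matrix.mulVec, dotProduct, Fin.sum_univ_three,
    Matrix.trace_fin_three, Matrix.cons_val_zero, Matrix.cons_val_one, Matrix.head_cons,
    Matrix.cons_val_two, Matrix.tail_cons]
  ring

/-- The Eulerian tessellation divergence `D₀(v)`, computed on the scaled tetrahedron with
edges `r_j = ε s_j`, converges to `div v(x₀)` (the trace of `Dv(x₀)`) as `ε → 0⁺`. -/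
theorem tessellation_divergence_converges
    (v : (Fin 3 → ℝ) → (Fin 3 → ℝ)) (x₀ : Fin 3 → ℝ)
    (hv : DifferentiableAt ℝ v x₀)
    (s₁ s₂ s₃ : Fin 3 → ℝ) (hli : LinearIndependent ℝ ![s₁, s₂, s₃]) :
    Tendsto (fun ε : ℝ =>
        (1 / ((crossProduct (ε • s₁) (ε • s₂)) ⬝ᵥ (ε • s₃))) *
          ((v (x₀ + ε • s₁) - v x₀) ⬝ᵥ (crossProduct (ε • s₂) (ε • s₃))
            + (v (x₀ + ε • s₂) - v x₀) ⬝ᵥ (crossProduct (ε • s₃) (ε • s₁))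
            + (v (x₀ + ε • s₃) - v x₀) ⬝ᵥ (crossProduct (ε • s₁) (ε • s₂))))
      (nhdsWithin 0 (Set.Ioi 0))
      (nhds (LinearMap.trace ℝ (Fin 3 → ℝ)
        (fderiv ℝ v x₀ : (Fin 3 → ℝ) →ₗ[ℝ] (Fin 3 → ℝ)))) := by
  set A := fderiv ℝ v x₀ with hAdef
  -- the (unscaled) triple product is nonzero, by linear independence
  have hV : (crossProduct s₁ s₂) ⬝ᵥ s₃ ≠ 0 := by
    have h1 : (crossProduct s₁ s₂) ⬝ᵥ s₃ = Matrix.det ![s₃, s₁, s₂] := by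
      rw [dotProduct_comm, triple_product_eq_det]
    have h2 : IsUnit (Matrix.of ![s₁, s₂, s₃]) := by
      rw [← Matrix.linearIndependent_rows_iff_isUnit]
      exact hli
    have h3 : Matrix.det (Matrix.of ![s₁, s₂, s₃]) ≠ 0 :=
      IsUnit.ne_zero ((Matrix.isUnit_iff_isUnit_det _).mp h2)
    have h4 : Matrix.det ![s₃, s₁, s₂] = Matrix.det (Matrix.of ![s₁, s₂, s₃]) := by
      refine (Matrix.det_fin_three (Matrix.of ![s₃, s₁, s₂])).trans ?_
      rw [Matrix.det_fin_three]; simp [Matrix.vecHead, Matrix.vecTail]; ring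
    rw [h1, h4]; exact h3
  -- directional derivatives
  have hd : ∀ s : Fin 3 → ℝ, Tendsto (fun ε : ℝ => ε⁻¹ • (v (x₀ + ε • s) - v x₀))
      (nhdsWithin 0 (Set.Ioi 0)) (nhds (A s)) := by
    intro s
    have h1 : HasDerivAt (fun ε : ℝ => x₀ + ε • s) s 0 := by
      simpa using ((hasDerivAt_id (0:ℝ)).smul_const s).const_add x₀
    have hf : HasFDerivAt v A (x₀ + (0:ℝ) • s) := by
      rw [show x₀ + (0:ℝ) • s = x₀ by simp]
      exact hv.hasFDerivAt
    have h2 : HasDerivAt (fun ε : ℝ => v (x₀ + ε • s)) (A s) 0 := hf.comp_hasDerivAt 0 h1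
    have h3 := hasDerivAt_iff_tendsto_slope.mp h2
    have h4 : Tendsto (slope (fun ε : ℝ => v (x₀ + ε • s)) 0)
        (nhdsWithin 0 (Set.Ioi 0)) (nhds (A s)) :=
      h3.mono_left (nhdsWithin_mono _ (fun x hx => ne_of_gt hx))
    refine h4.congr (fun ε => ?_)
    simp [slope, vsub_eq_sub]
  -- continuity of dotting with a constant
  have hcont : ∀ c : Fin 3 → ℝ, Continuous fun u : Fin 3 → ℝ => u ⬝ᵥ c := by
    intro c
    simp only [dotProduct, Fin.sum_univ_three]
    fun_prop
  have hdot : ∀ (s c : Fin 3 → ℝ), Tendsto (fun ε : ℝ => (ε⁻¹ • (v (x₀ + ε • s) - v x₀)) ⬝ᵥ c)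
      (nhdsWithin 0 (Set.Ioi 0)) (nhds ((A s) ⬝ᵥ c)) :=
    fun s c => ((hcont c).tendsto _).comp (hd s)
  -- the auxiliary limit
  have hlim : Tendsto (fun ε : ℝ => (1 / ((crossProduct s₁ s₂) ⬝ᵥ s₃)) *
      ((ε⁻¹ • (v (x₀ + ε • s₁) - v x₀)) ⬝ᵥ (crossProduct s₂ s₃)
        + (ε⁻¹ • (v (x₀ + ε • s₂) - v x₀)) ⬝ᵥ (crossProduct s₃ s₁)
        + (ε⁻¹ • (v (x₀ + ε • s₃) - v x₀)) ⬝ᵥ (crossProduct s₁ s₂)))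
      (nhdsWithin 0 (Set.Ioi 0))
      (nhds ((1 / ((crossProduct s₁ s₂) ⬝ᵥ s₃)) *
        ((A s₁) ⬝ᵥ (crossProduct s₂ s₃) + (A s₂) ⬝ᵥ (crossProduct s₃ s₁)
          + (A s₃) ⬝ᵥ (crossProduct s₁ s₂)))) :=
    (((hdot s₁ _).add (hdot s₂ _)).add (hdot s₃ _)).const_mul _
  -- evaluate the limit via the trace identity
  have hval : (1 / ((crossProduct s₁ s₂) ⬝ᵥ s₃)) *
      ((A s₁) ⬝ᵥ (crossProduct s₂ s₃) + (A s₂) ⬝ᵥ (crossProduct s₃ s₁)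
        + (A s₃) ⬝ᵥ (crossProduct s₁ s₂))
      = LinearMap.trace ℝ (Fin 3 → ℝ) (A : (Fin 3 → ℝ) →ₗ[ℝ] (Fin 3 → ℝ)) := by
    have hk := key_identity (A : (Fin 3 → ℝ) →ₗ[ℝ] (Fin 3 → ℝ)) s₁ s₂ s₃
    simp only [ContinuousLinearMap.coe_coe] at hk
    rw [hk, mul_comm (LinearMap.trace ℝ (Fin 3 → ℝ) (A : (Fin 3 → ℝ) →ₗ[ℝ] (Fin 3 → ℝ))) _,
      one_div, inv_mul_cancel_left₀ hV]
  rw [hAdef] at hval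
  rw [← hval]
  refine Tendsto.congr' ?_ hlim
  filter_upwards [self_mem_nhdsWithin] with ε (hε : ε ∈ Set.Ioi 0)
  have hε0 : ε ≠ 0 := ne_of_gt hε
  have hcs : ∀ a b : Fin 3 → ℝ, crossProduct (ε • a) (ε • b) = (ε * ε) • crossProduct a b := by
    intro a b
    rw [_root_.map_smul, LinearMap.map_smul₂, smul_smul]
  simp only [hcs, smul_dotProduct, dotProduct_smul, smul_eq_mul]
  revert hV
  generalize (crossProduct s₁) s₂ ⬝ᵥ s₃ = V
  generalize (v (x₀ + ε • s₁) - v x₀) ⬝ᵥ (crossProduct s₂) s₃ = d₁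
  generalize (v (x₀ + ε • s₂) - v x₀) ⬝ᵥ (crossProduct s₃) s₁ = d₂
  generalize (v (x₀ + ε • s₃) - v x₀) ⬝ᵥ (crossProduct s₁) s₂ = d₃
  intro hV
  field_simp
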